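/- If U, W : [0,1]² → [0,∞) are symmetric bounded measurable functions with U(x,y) + W(x,y) ≥ 2q pointwise for some constant q ≥ 0, then t(K₃, W) + t(K₃, U) ≥ 2q³, where t(K₃, W) = ∫∫∫ W(x,y)W(x,z)W(y,z) dx dy dz. -/

import Mathlib

/-!
Truncate `W` at `c = 2q`: the kernel `A = min W c` satisfies `0 ≤ A ≤ W` and `0 ≤ c - A ≤ U`,
so by monotonicity of triangle densities it suffices to prove Goodman's bound
`t(K₃, A) + t(K₃, c - A) ≥ c³/4`. With `M = A - c/2`, the pointwise identity
`abe + (c-a)(c-b)(c-e) = c³/4 + c((a-c/2)(b-c/2) + (a-c/2)(e-c/2) + (b-c/2)(e-c/2))`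
turns the two triangle integrals into `c³/4` plus `c` times three integrals over two-edge paths
("cherries") of `M`. Rotating the vertices and using symmetry, each of them equals
`∫ (∫ M x y dy)² dx ≥ 0`.
-/

open MeasureTheory Real

noncomputable section

def I01 : Set ℝ := Set.Icc 0 1

/-- Triangle density of a kernel `W`. -/
def tK3 (W : ℝ → ℝ → ℝ) : ℝ :=
  ∫ x in I01, ∫ y in I01, ∫ z in I01, W x y * W x z * W y z

open Function

section Triple

variable {α β γ E : Type*} [MeasurableSpace α] [MeasurableSpace β] [MeasurableSpace γ]
  [NormedAddCommGroup E] [NormedSpace ℝ E] {μ : Measure α} {ν : Measure β} {ρ : Measure γ}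

lemma integral_prod_prod_eq_iterated [SFinite μ] [SFinite ν] [SFinite ρ] {F : α × β × γ → E}
    (hF : Integrable F (μ.prod (ν.prod ρ))) :
    ∫ p, F p ∂μ.prod (ν.prod ρ) = ∫ x, ∫ y, ∫ z, F (x, y, z) ∂ρ ∂ν ∂μ := by
  rw [integral_prod _ hF]
  refine integral_congr_ae ?_
  filter_upwards [hF.prod_right_ae] with x hx
  exact integral_prod _ hx

lemma integral_prod_prod_rotate [SFinite μ] [SFinite ν] [SFinite ρ] (F : β × γ × α → E) :
    ∫ p, F (p.2.1, p.2.2, p.1) ∂μ.prod (ν.prod ρ) = ∫ p, F p ∂ν.prod (ρ.prod μ) :=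
  (integral_prod_swap (fun q => F (MeasurableEquiv.prodAssoc q))).trans
    ((measurePreserving_prodAssoc ν ρ μ).integral_comp' F)

end Triple

section Kernel

variable {α : Type*} [MeasurableSpace α] {μ : Measure α}

def triangleDensity (μ : Measure α) (K : α → α → ℝ) : ℝ :=
  ∫ x, ∫ y, ∫ z, K x y * K x z * K y z ∂μ ∂μ ∂μ

lemma tK3_eq_triangleDensity (W : ℝ → ℝ → ℝ) :
    tK3 W = triangleDensity (volume.restrict I01) W := rfl

lemma integrable_comp_edges [IsFiniteMeasure μ] {K : α → α → ℝ} (hK : Measurable (uncurry K))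
    {C : ℝ} (hKC : ∀ x y, |K x y| ≤ C) {g : ℝ × ℝ × ℝ → ℝ} (hg : Continuous g) :
    Integrable (fun p : α × α × α => g (K p.1 p.2.1, K p.1 p.2.2, K p.2.1 p.2.2))
      (μ.prod (μ.prod μ)) := by
  have hbox : IsCompact (Set.Icc (-C) C ×ˢ Set.Icc (-C) C ×ˢ Set.Icc (-C) C) :=
    isCompact_Icc.prod (isCompact_Icc.prod isCompact_Icc)
  obtain ⟨D, hD⟩ := hbox.exists_bound_of_continuousOn hg.continuousOn
  have hedge : ∀ x y, K x y ∈ Set.Icc (-C) C := fun x y => abs_le.mp (hKC x y)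
  refine Integrable.of_bound (hg.measurable.comp ?_).aestronglyMeasurable D
    (ae_of_all _ fun p => hD _ ⟨hedge _ _, hedge _ _, hedge _ _⟩)
  exact (hK.comp (measurable_fst.prodMk measurable_snd.fst)).prodMk
    ((hK.comp (measurable_fst.prodMk measurable_snd.snd)).prodMk
      (hK.comp (measurable_snd.fst.prodMk measurable_snd.snd)))

lemma triangleDensity_eq_integral_prod [IsFiniteMeasure μ] {K : α → α → ℝ}
    (hK : Measurable (uncurry K)) {C : ℝ} (hKC : ∀ x y, |K x y| ≤ C) :
    triangleDensity μ K = ∫ p, K p.1 p.2.1 * K p.1 p.2.2 * K p.2.1 p.2.2 ∂μ.prod (μ.prod μ) :=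
  (integral_prod_prod_eq_iterated
    (integrable_comp_edges hK hKC (g := fun t => t.1 * t.2.1 * t.2.2) (by fun_prop))).symm

lemma triangleDensity_mono [IsFiniteMeasure μ] {A B : α → α → ℝ} (hA : Measurable (uncurry A))
    (hB : Measurable (uncurry B)) (hA0 : ∀ x y, 0 ≤ A x y) (hAB : ∀ x y, A x y ≤ B x y) {C : ℝ}
    (hBC : ∀ x y, B x y ≤ C) : triangleDensity μ A ≤ triangleDensity μ B := by
  have hB0 x y : 0 ≤ B x y := (hA0 x y).trans (hAB x y)
  have hAC x y : |A x y| ≤ C := abs_le.mpr ⟨by linarith [hA0 x y, hB0 x y, hBC x y],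
    (hAB x y).trans (hBC x y)⟩
  have hBC' x y : |B x y| ≤ C := abs_le.mpr ⟨by linarith [hB0 x y, hBC x y], hBC x y⟩
  rw [triangleDensity_eq_integral_prod hA hAC, triangleDensity_eq_integral_prod hB hBC']
  refine integral_mono_of_nonneg (ae_of_all _ fun p =>
    mul_nonneg (mul_nonneg (hA0 _ _) (hA0 _ _)) (hA0 _ _))
    (integrable_comp_edges hB hBC' (g := fun t => t.1 * t.2.1 * t.2.2) (by fun_prop))
    (ae_of_all _ fun p => ?_)
  exact mul_le_mul (mul_le_mul (hAB _ _) (hAB _ _) (hA0 _ _) (hB0 _ _)) (hAB _ _) (hA0 _ _)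
    (mul_nonneg (hB0 _ _) (hB0 _ _))

lemma integral_cherry [IsFiniteMeasure μ] {K : α → α → ℝ} (hK : Measurable (uncurry K)) {C : ℝ}
    (hKC : ∀ x y, |K x y| ≤ C) :
    ∫ p, K p.1 p.2.1 * K p.1 p.2.2 ∂μ.prod (μ.prod μ) = ∫ x, (∫ y, K x y ∂μ) ^ 2 ∂μ := by
  rw [integral_prod_prod_eq_iterated
    (integrable_comp_edges hK hKC (g := fun t => t.1 * t.2.1) (by fun_prop))]
  simp only [integral_const_mul, integral_mul_const, sq]

lemma integral_cherries [IsFiniteMeasure μ] {K : α → α → ℝ} (hK : Measurable (uncurry K))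
    (hKsymm : ∀ x y, K x y = K y x) {C : ℝ} (hKC : ∀ x y, |K x y| ≤ C) :
    ∫ p, (K p.1 p.2.1 * K p.1 p.2.2 + K p.1 p.2.1 * K p.2.1 p.2.2 + K p.1 p.2.2 * K p.2.1 p.2.2)
      ∂μ.prod (μ.prod μ) = 3 * ∫ x, (∫ y, K x y ∂μ) ^ 2 ∂μ := by
  have i₁ : Integrable (fun p : α × α × α => K p.1 p.2.1 * K p.1 p.2.2) (μ.prod (μ.prod μ)) :=
    integrable_comp_edges hK hKC (g := fun t => t.1 * t.2.1) (by fun_prop)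
  have i₂ : Integrable (fun p : α × α × α => K p.1 p.2.1 * K p.2.1 p.2.2) (μ.prod (μ.prod μ)) :=
    integrable_comp_edges hK hKC (g := fun t => t.1 * t.2.2) (by fun_prop)
  have i₃ : Integrable (fun p : α × α × α => K p.1 p.2.2 * K p.2.1 p.2.2) (μ.prod (μ.prod μ)) :=
    integrable_comp_edges hK hKC (g := fun t => t.2.1 * t.2.2) (by fun_prop)
  have h₂ : ∫ p, K p.1 p.2.1 * K p.2.1 p.2.2 ∂μ.prod (μ.prod μ) =
      ∫ p, K p.1 p.2.1 * K p.1 p.2.2 ∂μ.prod (μ.prod μ) := by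
    rw [← integral_prod_prod_rotate fun p : α × α × α => K p.1 p.2.1 * K p.1 p.2.2]
    congr with p
    dsimp only
    rw [hKsymm p.2.1 p.1, mul_comm]
  have h₃ : ∫ p, K p.1 p.2.2 * K p.2.1 p.2.2 ∂μ.prod (μ.prod μ) =
      ∫ p, K p.1 p.2.1 * K p.1 p.2.2 ∂μ.prod (μ.prod μ) := by
    rw [← h₂, ← integral_prod_prod_rotate fun p : α × α × α => K p.1 p.2.1 * K p.2.1 p.2.2]
    congr with p
    dsimp only
    rw [hKsymm p.1, mul_comm]
  rw [integral_add ?_ i₃, integral_add i₁ i₂, h₂, h₃, integral_cherry hK hKC]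
  · ring
  · exact i₁.add i₂

theorem triangleDensity_add_triangleDensity_const_sub [IsProbabilityMeasure μ]
    {A : α → α → ℝ} (hA : Measurable (uncurry A)) (hAsymm : ∀ x y, A x y = A y x) {C : ℝ}
    (hAC : ∀ x y, |A x y| ≤ C) (c : ℝ) :
    triangleDensity μ A + triangleDensity μ (fun x y => c - A x y) =
      c ^ 3 / 4 + 3 * c * ∫ x, (∫ y, (A x y - c / 2) ∂μ) ^ 2 ∂μ := by
  set M : α → α → ℝ := fun x y => A x y - c / 2
  have hM : Measurable (uncurry M) := hA.sub measurable_const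
  have hMC x y : |M x y| ≤ C + |c / 2| := (abs_sub _ _).trans (by gcongr; exact hAC x y)
  have hcA : Measurable (uncurry fun x y => c - A x y) := measurable_const.sub hA
  have hcAC x y : |c - A x y| ≤ |c| + C := (abs_sub _ _).trans (by gcongr; exact hAC x y)
  set S : α × α × α → ℝ := fun p =>
    M p.1 p.2.1 * M p.1 p.2.2 + M p.1 p.2.1 * M p.2.1 p.2.2 + M p.1 p.2.2 * M p.2.1 p.2.2
  have hS : Integrable S (μ.prod (μ.prod μ)) :=
    integrable_comp_edges hM hMC (g := fun t => t.1 * t.2.1 + t.1 * t.2.2 + t.2.1 * t.2.2)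
      (by fun_prop)
  calc triangleDensity μ A + triangleDensity μ (fun x y => c - A x y)
      = ∫ p, (A p.1 p.2.1 * A p.1 p.2.2 * A p.2.1 p.2.2 +
          (c - A p.1 p.2.1) * (c - A p.1 p.2.2) * (c - A p.2.1 p.2.2)) ∂μ.prod (μ.prod μ) := by
        rw [triangleDensity_eq_integral_prod hA hAC, triangleDensity_eq_integral_prod hcA hcAC,
          integral_add (integrable_comp_edges hA hAC (g := fun t => t.1 * t.2.1 * t.2.2)
            (by fun_prop))
          (integrable_comp_edges hcA hcAC (g := fun t => t.1 * t.2.1 * t.2.2) (by fun_prop))]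
    _ = ∫ p, (c ^ 3 / 4 + c * S p) ∂μ.prod (μ.prod μ) := by
        congr with p
        simp only [S, M]
        ring
    _ = c ^ 3 / 4 + 3 * c * ∫ x, (∫ y, M x y ∂μ) ^ 2 ∂μ := by
        rw [integral_add (integrable_const _) (hS.const_mul c), integral_const, integral_const_mul,
          integral_cherries hM (fun x y => by simp only [M, hAsymm x y]) hMC]
        simp only [probReal_univ, one_smul]
        ring

theorem le_triangleDensity_add_triangleDensity_const_sub [IsProbabilityMeasure μ]
    {A : α → α → ℝ} (hA : Measurable (uncurry A)) (hAsymm : ∀ x y, A x y = A y x) {C : ℝ}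
    (hAC : ∀ x y, |A x y| ≤ C) {c : ℝ} (hc : 0 ≤ c) :
    c ^ 3 / 4 ≤ triangleDensity μ A + triangleDensity μ (fun x y => c - A x y) := by
  rw [triangleDensity_add_triangleDensity_const_sub hA hAsymm hAC]
  have : 0 ≤ ∫ x, (∫ y, (A x y - c / 2) ∂μ) ^ 2 ∂μ := integral_nonneg fun x => sq_nonneg _
  nlinarith

end Kernel

theorem stmt_2 (U W : ℝ → ℝ → ℝ) (q : ℝ) (hq : 0 ≤ q)
    (hUnn : ∀ x y, 0 ≤ U x y) (hWnn : ∀ x y, 0 ≤ W x y)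
    (hWsymm : ∀ x y, W x y = W y x)
    (hUmeas : Measurable (Function.uncurry U))
    (hWmeas : Measurable (Function.uncurry W))
    (hUbdd : ∃ C : ℝ, ∀ x y, U x y ≤ C)
    (hWbdd : ∃ C : ℝ, ∀ x y, W x y ≤ C)
    (hsum : ∀ x y, 2 * q ≤ U x y + W x y) :
    tK3 W + tK3 U ≥ 2 * q ^ 3 := by
  have : IsProbabilityMeasure (volume.restrict I01) := ⟨by simp [I01]⟩
  obtain ⟨CU, hCU⟩ := hUbdd
  obtain ⟨CW, hCW⟩ := hWbdd
  set A : ℝ → ℝ → ℝ := fun x y => min (W x y) (2 * q)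
  have hA : Measurable (uncurry A) := hWmeas.min measurable_const
  have hcA : Measurable (uncurry fun x y => 2 * q - A x y) := measurable_const.sub hA
  have hA0 x y : 0 ≤ A x y := le_min (hWnn x y) (by positivity)
  have hAq x y : A x y ≤ 2 * q := min_le_right _ _
  have hAU x y : 2 * q - A x y ≤ U x y := by
    rcases min_choice (W x y) (2 * q) with h | h <;> simp only [A, h] <;>
      linarith [hsum x y, hUnn x y]
  rw [ge_iff_le, tK3_eq_triangleDensity, tK3_eq_triangleDensity]
  calc 2 * q ^ 3 = (2 * q) ^ 3 / 4 := by ring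
    _ ≤ triangleDensity _ A + triangleDensity _ fun x y => 2 * q - A x y :=
      le_triangleDensity_add_triangleDensity_const_sub hA (fun x y => by simp only [A, hWsymm x y])
        (fun x y => abs_le.mpr ⟨by linarith [hA0 x y], hAq x y⟩) (by positivity)
    _ ≤ triangleDensity _ W + triangleDensity _ U :=
      add_le_add (triangleDensity_mono hA hWmeas hA0 (fun x y => min_le_left _ _) hCW)
        (triangleDensity_mono hcA hUmeas (fun x y => sub_nonneg.mpr (hAq x y)) hAU hCU)
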